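/- arXiv:1707.09601 — 3 statements merged into one kernel-verified Lean document; each statement's English description precedes it below -/
import Mathlib

section
/- Let f be a relation on a set X with a bounded pseudometric d. For every x, y, z ∈ X, m_d^f(x,y) ≤ m_d^f(x,z) + m_d^f(z,y), where m_d^f(x,y) is the infimum over all finite sequences [(a₁,b₁),...,(aₙ,bₙ)] of pairs in f of the chain-bound max(d(x,a₁), d(b₁,a₂), ..., d(b_{n-1},aₙ), d(bₙ,y)). -/
namespace ChainRec

variable {X : Type*}

/-- chain-length of a chain, with `x` the start point and `y` the end point.
For `c = [(a₁,b₁),…,(aₙ,bₙ)]` this is `d x a₁ + Σ d bᵢ a_{i+1} + d bₙ y`. -/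
noncomputable def chainLen (d : X → X → ℝ) : X → X → List (X × X) → ℝ
  | x, y, [] => d x y
  | x, y, p :: t => d x p.1 + chainLen d p.2 y t

/-- chain-bound of a chain: the max of all the gap distances. -/
noncomputable def chainBound (d : X → X → ℝ) : X → X → List (X × X) → ℝ
  | x, y, [] => d x y
  | x, y, p :: t => max (d x p.1) (chainBound d p.2 y t)

/-- The Aubry–Mather barrier function `ℓ_d^f`. -/
noncomputable def ell (d : X → X → ℝ) (f : Set (X × X)) (x y : X) : ℝ :=
  sInf { r | ∃ c : List (X × X), c ≠ [] ∧ (∀ p ∈ c, p ∈ f) ∧ r = chainLen d x y c }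

/-- The Conley barrier function `m_d^f`. -/
noncomputable def mbar (d : X → X → ℝ) (f : Set (X × X)) (x y : X) : ℝ :=
  sInf { r | ∃ c : List (X × X), c ≠ [] ∧ (∀ p ∈ c, p ∈ f) ∧ r = chainBound d x y c }

/-! Splicing a chain from `x` to `z` onto a chain from `z` to `y` gives a chain from `x` to `y`;
its only new gap `d(bₙ, a'₁)` is at most `d(bₙ, z) + d(z, a'₁)`, so its chain-bound is at most
the sum of the two chain-bounds. Taking infima over both chains gives the inequality.
For `f = ∅` there are no chains and all three values are `sInf ∅ = 0`. -/

theorem nonneg_of_pseudometric {d : X → X → ℝ} (hrefl : ∀ x, d x x = 0)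
    (hsymm : ∀ x y, d x y = d y x) (htri : ∀ x y z, d x z ≤ d x y + d y z) (x y : X) :
    0 ≤ d x y := by
  have := htri x y x
  rw [hrefl, hsymm y x] at this
  linarith

section ChainBound

variable {d : X → X → ℝ}

theorem chainBound_nonneg (hd : ∀ x y, 0 ≤ d x y) (x y : X) : ∀ c, 0 ≤ chainBound d x y c
  | [] => hd x y
  | p :: _ => (hd x p.1).trans (le_max_left _ _)

theorem chainBound_le_dist_add (hd : ∀ x y, 0 ≤ d x y)
    (htri : ∀ x y z, d x z ≤ d x y + d y z) (x z y : X) :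
    ∀ c, chainBound d x y c ≤ d x z + chainBound d z y c
  | [] => htri x z y
  | p :: t => by
    simp only [chainBound]
    refine max_le ((htri x z p.1).trans (by gcongr; exact le_max_left _ _)) ?_
    exact le_add_of_nonneg_of_le (hd x z) (le_max_right _ _)

theorem chainBound_append_le (hd : ∀ x y, 0 ≤ d x y)
    (htri : ∀ x y z, d x z ≤ d x y + d y z) (c₂ : List (X × X)) (z y : X) :
    ∀ (c₁ : List (X × X)) (x : X),
      chainBound d x y (c₁ ++ c₂) ≤ chainBound d x z c₁ + chainBound d z y c₂
  | [], x => chainBound_le_dist_add hd htri x z y c₂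
  | p :: t, x => by
    simp only [List.cons_append, chainBound]
    refine max_le ?_ ?_
    · exact le_add_of_le_of_nonneg (le_max_left _ _) (chainBound_nonneg hd z y c₂)
    · exact (chainBound_append_le hd htri c₂ z y t p.2).trans (by gcongr; exact le_max_right _ _)

end ChainBound

open scoped Pointwise

def chainBounds (d : X → X → ℝ) (f : Set (X × X)) (x y : X) : Set ℝ :=
  { r | ∃ c : List (X × X), c ≠ [] ∧ (∀ p ∈ c, p ∈ f) ∧ r = chainBound d x y c }

theorem mbar_eq_sInf_chainBounds (d : X → X → ℝ) (f : Set (X × X)) (x y : X) :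
    mbar d f x y = sInf (chainBounds d f x y) := rfl

theorem chainBounds_empty (d : X → X → ℝ) (x y : X) : chainBounds d ∅ x y = ∅ := by
  refine Set.eq_empty_of_forall_notMem ?_
  rintro r ⟨_ | ⟨p, _⟩, hne, hf, -⟩
  · exact hne rfl
  · exact hf p List.mem_cons_self

theorem mbar_empty (d : X → X → ℝ) (x y : X) : mbar d ∅ x y = 0 := by
  rw [mbar_eq_sInf_chainBounds, chainBounds_empty, Real.sInf_empty]

theorem chainBounds_nonempty (d : X → X → ℝ) {f : Set (X × X)} (hf : f.Nonempty) (x y : X) :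
    (chainBounds d f x y).Nonempty :=
  let ⟨p, hp⟩ := hf
  ⟨_, [p], List.cons_ne_nil _ _, by simpa using hp, rfl⟩

theorem chainBounds_bddBelow {d : X → X → ℝ} (hd : ∀ x y, 0 ≤ d x y) (f : Set (X × X))
    (x y : X) : BddBelow (chainBounds d f x y) :=
  ⟨0, by rintro _ ⟨c, -, -, rfl⟩; exact chainBound_nonneg hd x y c⟩

theorem exists_mem_chainBounds_le_of_mem_add {d : X → X → ℝ} (hd : ∀ x y, 0 ≤ d x y)
    (htri : ∀ x y z, d x z ≤ d x y + d y z) {f : Set (X × X)} {x z y : X} {r : ℝ}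
    (hr : r ∈ chainBounds d f x z + chainBounds d f z y) :
    ∃ s ∈ chainBounds d f x y, s ≤ r := by
  obtain ⟨_, ⟨c₁, hc₁, hf₁, rfl⟩, _, ⟨c₂, -, hf₂, rfl⟩, rfl⟩ := hr
  refine ⟨_, ⟨c₁ ++ c₂, by simp [hc₁], ?_, rfl⟩, chainBound_append_le hd htri c₂ z y c₁ x⟩
  simpa only [List.mem_append] using fun p hp => hp.elim (hf₁ p) (hf₂ p)

theorem mbar_triangle_general (d : X → X → ℝ) (f : Set (X × X))
    (hrefl : ∀ x, d x x = 0) (hsymm : ∀ x y, d x y = d y x)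
    (htri : ∀ x y z, d x z ≤ d x y + d y z)
    (x y z : X) :
    mbar d f x y ≤ mbar d f x z + mbar d f z y := by
  rcases f.eq_empty_or_nonempty with rfl | hf
  · simp only [mbar_empty, add_zero, le_refl]
  have hd := nonneg_of_pseudometric hrefl hsymm htri
  simp only [mbar_eq_sInf_chainBounds]
  rw [← csInf_add (chainBounds_nonempty d hf x z) (chainBounds_bddBelow hd f x z)
    (chainBounds_nonempty d hf z y) (chainBounds_bddBelow hd f z y)]
  refine le_csInf ((chainBounds_nonempty d hf x z).add (chainBounds_nonempty d hf z y)) ?_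
  intro r hr
  obtain ⟨s, hs, hsr⟩ := exists_mem_chainBounds_le_of_mem_add hd htri hr
  exact (csInf_le (chainBounds_bddBelow hd f x y) hs).trans hsr

theorem mbar_triangle [Nonempty X] (d : X → X → ℝ) (f : Set (X × X))
    (hrefl : ∀ x, d x x = 0) (hsymm : ∀ x y, d x y = d y x)
    (htri : ∀ x y z, d x z ≤ d x y + d y z)
    (hbdd : ∃ C, ∀ x y, d x y ≤ C)
    (x y z : X) :
    mbar d f x y ≤ mbar d f x z + mbar d f z y :=
  mbar_triangle_general d f hrefl hsymm htri x y z

end ChainRec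
end

section
/- Let f be a relation on (X,d) and define 𝒜_d f = {(x,y) : ℓ_d^f(x,y) = 0}. Then ℓ_d^{𝒜_d f} = ℓ_d^f; in particular 𝒜_d(𝒜_d f) = 𝒜_d f. -/
namespace ChainRec

variable {X : Type*}

/-- The Aubry–Mather chain relation `𝒜_d f`. -/
def aubryRel (d : X → X → ℝ) (f : Set (X × X)) : Set (X × X) :=
  { p | ell d f p.1 p.2 = 0 }

section Aux
variable (d : X → X → ℝ)

lemma chainLen_nonneg (hd : ∀ x y, 0 ≤ d x y) :
    ∀ (x y : X) (c : List (X × X)), 0 ≤ chainLen d x y c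
  | x, y, [] => hd x y
  | x, y, p :: t => add_nonneg (hd x p.1) (chainLen_nonneg hd p.2 y t)

lemma chainLen_left (htri : ∀ x y z, d x z ≤ d x y + d y z) (x w y : X) (c : List (X × X)) :
    chainLen d x y c ≤ d x w + chainLen d w y c := by
  cases c with
  | nil => exact htri x w y
  | cons p t => simp only [chainLen]; have := htri x w p.1; linarith

lemma chainLen_right (htri : ∀ x y z, d x z ≤ d x y + d y z) :
    ∀ (x y w : X) (c : List (X × X)), chainLen d x y c ≤ chainLen d x w c + d w y
  | x, y, w, [] => htri x w y
  | x, y, w, p :: t => by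
      simp only [chainLen]
      have := chainLen_right htri p.2 y w t; linarith

lemma chainLen_append (htri : ∀ x y z, d x z ≤ d x y + d y z) :
    ∀ (x z y : X) (c₁ c₂ : List (X × X)),
      chainLen d x y (c₁ ++ c₂) ≤ chainLen d x z c₁ + chainLen d z y c₂
  | x, z, y, [], c₂ => by
      simpa [chainLen] using chainLen_left d htri x z y c₂
  | x, z, y, p :: t, c₂ => by
      show d x p.1 + chainLen d p.2 y (t ++ c₂) ≤
        d x p.1 + chainLen d p.2 z t + chainLen d z y c₂
      have := chainLen_append htri p.2 z y t c₂; linarith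

lemma bdd_chains (hd : ∀ x y, 0 ≤ d x y) (f : Set (X × X)) (x y : X) :
    BddBelow { r | ∃ c : List (X × X), c ≠ [] ∧ (∀ p ∈ c, p ∈ f) ∧ r = chainLen d x y c } := by
  refine ⟨0, ?_⟩
  rintro r ⟨c, -, -, rfl⟩
  exact chainLen_nonneg d hd x y c

lemma ell_le (hd : ∀ x y, 0 ≤ d x y) (f : Set (X × X)) {x y : X} {c : List (X × X)}
    (hc : c ≠ []) (hcf : ∀ p ∈ c, p ∈ f) : ell d f x y ≤ chainLen d x y c :=
  csInf_le (bdd_chains d hd f x y) ⟨c, hc, hcf, rfl⟩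

lemma ell_nonneg (hd : ∀ x y, 0 ≤ d x y) (f : Set (X × X)) (x y : X) : 0 ≤ ell d f x y := by
  apply Real.sInf_nonneg
  rintro r ⟨c, -, -, rfl⟩
  exact chainLen_nonneg d hd x y c

lemma chains_nonempty (f : Set (X × X)) (hf : f.Nonempty) (x y : X) :
    { r | ∃ c : List (X × X), c ≠ [] ∧ (∀ p ∈ c, p ∈ f) ∧ r = chainLen d x y c }.Nonempty := by
  obtain ⟨p, hp⟩ := hf
  exact ⟨chainLen d x y [p], [p], by simp, by simpa using hp, rfl⟩

lemma key (hd : ∀ x y, 0 ≤ d x y) (htri : ∀ x y z, d x z ≤ d x y + d y z)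
    (f : Set (X × X)) (hf : f.Nonempty) :
    ∀ (c : List (X × X)) (x y : X), (∀ p ∈ c, ell d f p.1 p.2 = 0) →
      ∀ ε : ℝ, 0 < ε → c ≠ [] →
      ∃ c' : List (X × X), c' ≠ [] ∧ (∀ p ∈ c', p ∈ f) ∧
        chainLen d x y c' ≤ chainLen d x y c + ε := by
  intro c
  induction c with
  | nil => intro x y _ ε _ h; exact absurd rfl h
  | cons p t ih =>
    intro x y hc ε hε _
    -- get an f-chain from p.1 to p.2 of length < ε/2
    have h0 : ell d f p.1 p.2 = 0 := hc p (by simp)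
    have hne := chains_nonempty d f hf p.1 p.2
    have hlt : ell d f p.1 p.2 < ε / 2 := by rw [h0]; linarith
    obtain ⟨r, ⟨c₀, hc₀ne, hc₀f, rfl⟩, hr⟩ := exists_lt_of_csInf_lt hne hlt
    cases t with
    | nil =>
      refine ⟨c₀, hc₀ne, hc₀f, ?_⟩
      have h1 : chainLen d x y c₀ ≤ d x p.1 + chainLen d p.1 y c₀ := chainLen_left d htri x p.1 y c₀
      have h2 : chainLen d p.1 y c₀ ≤ chainLen d p.1 p.2 c₀ + d p.2 y := chainLen_right d htri p.1 y p.2 c₀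
      simp only [chainLen]
      linarith
    | cons q t' =>
      obtain ⟨c₁, hc₁ne, hc₁f, hc₁len⟩ :=
        ih p.2 y (fun p hp => hc p (by simp [hp])) (ε / 2) (by linarith) (by simp)
      refine ⟨c₀ ++ c₁, by simp [hc₀ne], ?_, ?_⟩
      · intro q hq
        rcases List.mem_append.1 hq with h | h
        · exact hc₀f q h
        · exact hc₁f q h
      · have h1 := chainLen_append d htri x p.2 y c₀ c₁
        have h2 : chainLen d x p.2 c₀ ≤ d x p.1 + chainLen d p.1 p.2 c₀ :=
          chainLen_left d htri x p.1 p.2 c₀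
        simp only [chainLen] at *
        linarith

end Aux

theorem aubry_idempotent [Nonempty X] (d : X → X → ℝ) (f : Set (X × X))
    (hrefl : ∀ x, d x x = 0) (hsymm : ∀ x y, d x y = d y x)
    (htri : ∀ x y z, d x z ≤ d x y + d y z)
    (hbdd : ∃ C, ∀ x y, d x y ≤ C)
    :
    (∀ x y, ell d (aubryRel d f) x y = ell d f x y) ∧
    aubryRel d (aubryRel d f) = aubryRel d f := by
  have hd : ∀ x y, 0 ≤ d x y := by
    intro x y
    have h1 := htri x y x
    have h2 := hsymm y x
    have h3 := hrefl x
    linarith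
  set A := aubryRel d f with hA
  have heq : ∀ x y, ell d A x y = ell d f x y := by
    rcases f.eq_empty_or_nonempty with hf | hf
    · have hellf : ∀ x y, ell d f x y = 0 := by
        intro x y
        have hemp : {r | ∃ c : List (X × X), c ≠ [] ∧ (∀ p ∈ c, p ∈ f) ∧
            r = chainLen d x y c} = ∅ := by
          ext r
          simp only [Set.mem_setOf_eq, Set.mem_empty_iff_false, iff_false, not_exists]
          rintro c ⟨hc, hcf, rfl⟩
          cases c with
          | nil => exact hc rfl
          | cons p t => exact absurd (hcf p (by simp)) (by simp [hf])
        rw [ell, hemp, Real.sInf_empty]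
      have hellA : ∀ x y, ell d A x y = 0 := by
        intro x y
        refine le_antisymm ?_ (ell_nonneg d hd A x y)
        have hmem : ∀ p ∈ [(x, y)], p ∈ A := by
          intro p _
          exact hellf p.1 p.2
        have := ell_le d hd A (x := x) (y := y) (c := [(x, y)]) (by simp) hmem
        simpa [chainLen, hrefl] using this
      intro x y; rw [hellA, hellf]
    · have hfA : f ⊆ A := by
        intro p hp
        show ell d f p.1 p.2 = 0
        refine le_antisymm ?_ (ell_nonneg d hd f p.1 p.2)
        have := ell_le d hd f (x := p.1) (y := p.2) (c := [p]) (by simp) (by simpa using hp)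
        simpa [chainLen, hrefl] using this
      intro x y
      refine le_antisymm ?_ ?_
      · exact csInf_le_csInf (bdd_chains d hd A x y) (chains_nonempty d f hf x y)
          (by rintro r ⟨c, hc, hcf, rfl⟩; exact ⟨c, hc, fun p hp => hfA (hcf p hp), rfl⟩)
      · refine le_csInf (chains_nonempty d A (hf.mono hfA) x y) ?_
        rintro r ⟨c, hc, hcA, rfl⟩
        refine le_of_forall_pos_le_add ?_
        intro ε hε
        obtain ⟨c', hc'ne, hc'f, hlen⟩ := key d hd htri f hf c x y (fun p hp => hcA p hp) ε hε hc
        exact (ell_le d hd f hc'ne hc'f).trans hlen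
  refine ⟨heq, ?_⟩
  ext p
  show ell d A p.1 p.2 = 0 ↔ p ∈ A
  rw [heq p.1 p.2]
  exact Iff.rfl

end ChainRec
end

section
/- Let f ⊆ F be relations on X with F transitive and F = f ∪ F ∘ f (i.e., every (x,y) ∈ F is in f or satisfies: ∃z with (x,z) ∈ f and (z,y) ∈ F). Suppose F₁ is another transitive relation on X with f ⊆ F₁ and F₁ = f ∪ F₁ ∘ f. If 1_X ∪ F = 1_X ∪ F₁, then F = F₁. -/
/-- Only the diagonal of `F` can escape `G`, and a loop `(x, x) ∈ F` either lies in `f ⊆ G` or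
passes through some `(x, z) ∈ f` with `z ≠ x`, so that it is closed up in `G` by transitivity. -/
lemma subset_of_subset_diag_union {X : Type*} {f F G : Set (X × X)} (hfG : f ⊆ G)
    (hG : ∀ x y z : X, (x, y) ∈ G → (y, z) ∈ G → (x, z) ∈ G)
    (hF : F ⊆ f ∪ { p : X × X | ∃ z, (p.1, z) ∈ f ∧ (z, p.2) ∈ F })
    (hFG : F ⊆ { p : X × X | p.1 = p.2 } ∪ G) :
    F ⊆ G := by
  rintro ⟨x, y⟩ hxy
  obtain (rfl : x = y) | hxyG := hFG hxy
  · obtain hxf | ⟨z, hxz, hzx⟩ := hF hxy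
    · exact hfG hxf
    · obtain (rfl : z = x) | hzxG := hFG hzx
      · exact hfG hxz
      · exact hG x z x (hfG hxz) hzxG
  · exact hxyG

theorem rel_eq_of_diag_union_eq {X : Type*} (f F F₁ : Set (X × X))
    (hfF : f ⊆ F) (hfF₁ : f ⊆ F₁)
    (htrans : ∀ x y z : X, (x, y) ∈ F → (y, z) ∈ F → (x, z) ∈ F)
    (htrans₁ : ∀ x y z : X, (x, y) ∈ F₁ → (y, z) ∈ F₁ → (x, z) ∈ F₁)
    (hF : F = f ∪ { p : X × X | ∃ z, (p.1, z) ∈ f ∧ (z, p.2) ∈ F })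
    (hF₁ : F₁ = f ∪ { p : X × X | ∃ z, (p.1, z) ∈ f ∧ (z, p.2) ∈ F₁ })
    (heq : { p : X × X | p.1 = p.2 } ∪ F = { p : X × X | p.1 = p.2 } ∪ F₁) :
    F = F₁ :=
  Set.Subset.antisymm
    (subset_of_subset_diag_union hfF₁ htrans₁ hF.subset (heq ▸ Set.subset_union_right))
    (subset_of_subset_diag_union hfF htrans hF₁.subset (heq ▸ Set.subset_union_right))
end
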